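/- arXiv:1707.04341 — 10 statements merged into one kernel-verified Lean document; each statement's English description precedes it below -/
import Mathlib

section
/- Let X be a totally ordered set and F : X^n → X (n ≥ 2) an n-associative, idempotent, nondecreasing function. Then for every a, c ∈ X, F(a, c, c, ..., c) = F(a, a, ..., a, c), i.e., F(a, (n-1)·c) = F((n-1)·a, c). -/
/-- `innerApp n F x i` is `F (x i, x (i+1), ..., x (i+n-1))`. -/
def innerApp {X : Type*} (n : ℕ) (F : (Fin n → X) → X) (x : ℕ → X) (i : ℕ) : X :=
  F (fun k => x (i + (k : ℕ)))

/-- `compApp n F x i` is `F (x 0, ..., x (i-1), F (x i, ..., x (i+n-1)), x (i+n), ..., x (2n-2))`,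
i.e. `F` applied to the `(2n-1)`-tuple `x 0, ..., x (2n-2)` with the inner `F` at position `i`. -/
def compApp {X : Type*} (n : ℕ) (F : (Fin n → X) → X) (x : ℕ → X) (i : ℕ) : X :=
  F (fun j => if (j : ℕ) < i then x (j : ℕ)
      else if (j : ℕ) = i then innerApp n F x i
      else x ((j : ℕ) + n - 1))

/-- `F` is `n`-associative. -/
def NAssoc {X : Type*} (n : ℕ) (F : (Fin n → X) → X) : Prop :=
  ∀ (x : ℕ → X) (i : ℕ), i ≤ n - 1 → compApp n F x i = compApp n F x 0

/-- `F` is idempotent. -/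
def Idem {X : Type*} (n : ℕ) (F : (Fin n → X) → X) : Prop :=
  ∀ a : X, F (fun _ => a) = a

/-- `F` is nondecreasing in each variable. -/
def Nondecr {X : Type*} [Preorder X] (n : ℕ) (F : (Fin n → X) → X) : Prop :=
  ∀ x y : Fin n → X, (∀ j, x j ≤ y j) → F x ≤ F y

/-- `F` is monotone: every unary section is order-preserving or order-reversing. -/
def MonoSec {X : Type*} [Preorder X] (n : ℕ) (F : (Fin n → X) → X) : Prop :=
  ∀ (i : Fin n) (a : Fin n → X),
    Monotone (fun t => F (Function.update a i t)) ∨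
      Antitone (fun t => F (Function.update a i t))

/-- `F` is quasitrivial. -/
def Quasitrivial {X : Type*} (n : ℕ) (F : (Fin n → X) → X) : Prop :=
  ∀ x : Fin n → X, ∃ j, F x = x j

/-- `F` is symmetric. -/
def Symm {X : Type*} (n : ℕ) (F : (Fin n → X) → X) : Prop :=
  ∀ (σ : Equiv.Perm (Fin n)) (x : Fin n → X), F (x ∘ σ) = F x

/-- `iterComp G x k = x 0 ∘ x 1 ∘ ... ∘ x k` where `a ∘ b = G a b`. -/
def iterComp {X : Type*} (G : X → X → X) (x : ℕ → X) : ℕ → X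
  | 0 => x 0
  | k+1 => G (iterComp G x k) (x (k+1))

/-- `F` is derived from the binary operation `G`:
`F (x 0, ..., x (n-1)) = x 0 ∘ x 1 ∘ ... ∘ x (n-1)`. -/
def DerivedFrom {X : Type*} (n : ℕ) (F : (Fin n → X) → X) (G : X → X → X) : Prop :=
  ∀ x : ℕ → X, F (fun j => x (j : ℕ)) = iterComp G x (n - 1)

/-- `e` is a neutral element of the `n`-ary operation `F`. -/
def NeutralN {X : Type*} (n : ℕ) (F : (Fin n → X) → X) (e : X) : Prop :=
  ∀ (i : Fin n) (x : X), F (fun j => if j = i then x else e) = x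

/-!
Idempotency lets `F` absorb repeated end arguments: associativity on the word `(n-1)·x₀, x`
gives `F((n-1)·x₀, F x) = F x`, and on `x, (n-1)·x_{n-1}` gives `F(F x, (n-1)·x_{n-1}) = F x`.
For `u = F(a, (n-1)·c)`, `v = F((n-1)·a, c)` and `a ≤ c`, monotonicity gives `v ≤ u ≤ c`, hence
`u = F((n-1)·a, u) ≤ F((n-1)·a, c) = v`; the case `c ≤ a` is the mirror image.
-/

section Assoc

variable {X : Type*} {n : ℕ} {F : (Fin n → X) → X}

theorem compApp_zero (x : ℕ → X) :
    compApp n F x 0 =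
      F (fun j => if (j : ℕ) = 0 then innerApp n F x 0 else x (j + n - 1)) := by
  simp [compApp]

theorem compApp_last (x : ℕ → X) :
    compApp n F x (n - 1) =
      F (fun j => if (j : ℕ) < n - 1 then x j else innerApp n F x (n - 1)) := by
  unfold compApp
  congr 1
  funext j
  have := j.is_lt
  split_ifs <;> first | rfl | omega

theorem NAssoc.prepend_head_copies (hA : NAssoc n F) (hI : Idem n F) (x : ℕ → X) :
    F (fun j => if (j : ℕ) < n - 1 then x 0 else F (fun k => x k)) = F (fun k => x k) := by
  set y : ℕ → X := fun k => if k < n - 1 then x 0 else x (k - (n - 1))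
  have hinner_zero : innerApp n F y 0 = x 0 := by
    have hconst : (fun k : Fin n => y (0 + k)) = fun _ => x 0 := by
      funext k
      have := k.is_lt
      simp only [y]
      split_ifs <;> first | rfl | (congr 1; omega)
    rw [innerApp, hconst, hI]
  have hinner_last : innerApp n F y (n - 1) = F (fun k => x k) := by
    unfold innerApp
    congr 1
    funext k
    simp only [y]
    split_ifs <;> first | omega | (congr 1; omega)
  have h := hA y (n - 1) le_rfl
  rw [compApp_last, compApp_zero, hinner_zero, hinner_last] at h
  refine (congrArg F ?_).trans (h.trans (congrArg F ?_)) <;> funext j <;> have := j.is_lt <;>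
    simp only [y] <;> split_ifs <;> first | rfl | omega | (congr 1; omega)

theorem NAssoc.append_last_copies (hA : NAssoc n F) (hI : Idem n F) (x : ℕ → X) :
    F (fun j => if (j : ℕ) = 0 then F (fun k => x k) else x (n - 1)) = F (fun k => x k) := by
  set y : ℕ → X := fun k => if k < n then x k else x (n - 1)
  have hinner_zero : innerApp n F y 0 = F (fun k => x k) := by
    unfold innerApp
    congr 1
    funext k
    have := k.is_lt
    simp only [y]
    split_ifs <;> first | omega | (congr 1; omega)
  have hinner_last : innerApp n F y (n - 1) = x (n - 1) := by
    have hconst : (fun k : Fin n => y (n - 1 + k)) = fun _ => x (n - 1) := by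
      funext k
      simp only [y]
      split_ifs <;> first | rfl | (congr 1; omega)
    rw [innerApp, hconst, hI]
  have h := hA y (n - 1) le_rfl
  rw [compApp_last, compApp_zero, hinner_zero, hinner_last] at h
  refine (congrArg F ?_).trans (h.symm.trans (congrArg F ?_)) <;> funext j <;> have := j.is_lt <;>
    simp only [y] <;> split_ifs <;> first | rfl | omega | (congr 1; omega)

end Assoc

theorem stmt0 {X : Type*} [LinearOrder X] (n : ℕ) (hn : 2 ≤ n)
    (F : (Fin n → X) → X) (hA : NAssoc n F) (hI : Idem n F) (hM : Nondecr n F)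
    (a c : X) :
    F (fun j => if (j : ℕ) = 0 then a else c) =
      F (fun j => if (j : ℕ) = n - 1 then c else a) := by
  set u := F (fun j => if (j : ℕ) = 0 then a else c)
  set v := F (fun j => if (j : ℕ) = n - 1 then c else a)
  have hu : F (fun j => if (j : ℕ) < n - 1 then a else u) = u := by
    simpa using hA.prepend_head_copies hI (fun k => if k = 0 then a else c)
  have hv : F (fun j => if (j : ℕ) = 0 then v else c) = v := by
    simpa [show n - 1 ≠ 0 by omega] using
      hA.append_last_copies hI (fun k => if k = n - 1 then c else a)
  rcases le_total a c with hac | hca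
  · have hvu : v ≤ u := hM _ _ fun j => by split_ifs <;> first | exact le_rfl | exact hac | omega
    have huc : u ≤ c := hI c ▸ hM _ _ fun j => by split_ifs <;> first | exact le_rfl | exact hac
    refine le_antisymm ?_ hvu
    calc u = F (fun j => if (j : ℕ) < n - 1 then a else u) := hu.symm
      _ ≤ v := hM _ _ fun j => by split_ifs <;> first | exact le_rfl | exact huc | omega
  · have huv : u ≤ v := hM _ _ fun j => by split_ifs <;> first | exact le_rfl | exact hca | omega
    have hav : v ≤ a := hI a ▸ hM _ _ fun j => by split_ifs <;> first | exact le_rfl | exact hca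
    refine le_antisymm huv ?_
    calc v = F (fun j => if (j : ℕ) = 0 then v else c) := hv.symm
      _ ≤ u := hM _ _ fun j => by split_ifs <;> first | exact le_rfl | exact hav
end

section
/- Let X be a totally ordered set and F : X^n → X an n-associative, idempotent, nondecreasing function. Then for all a, c ∈ X and all 1 ≤ k ≤ n-1, the value F(k·a, (n-k)·c) is the same for every such k; in particular F(k·a,(n-k)·c) = F((n-1)·a, c). -/
section

variable {X : Type*} {n : ℕ} {F : (Fin n → X) → X}

/-- The tuple `(k·a, (n-k)·c)`. -/
def blocks (n k : ℕ) (a c : X) : Fin n → X := fun j => if (j : ℕ) < k then a else c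

theorem NAssoc.apply_eq_apply_blocks (hA : NAssoc n F) (hI : Idem n F) (y : ℕ → X) :
    F (fun j => y j) = F (blocks n (n - 1) (y 0) (F fun j => y j)) := by
  -- truncated subtraction makes `j ↦ y (j - (n - 1))` the tuple `((n-1)·y 0, y 0, y 1, …)`
  have hassoc := hA (fun j => y (j - (n - 1))) (n - 1) le_rfl
  have head_collapse : innerApp n F (fun j => y (j - (n - 1))) 0 = y 0 := by
    unfold innerApp
    conv_rhs => rw [← hI (y 0)]
    congr 1
    funext k
    have := k.isLt
    dsimp only
    congr 1
    omega
  have tail_inner : innerApp n F (fun j => y (j - (n - 1))) (n - 1) = F fun j => y j := by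
    unfold innerApp
    congr 1
    funext k
    dsimp only
    congr 1
    omega
  unfold compApp at hassoc
  rw [head_collapse, tail_inner] at hassoc
  convert hassoc.symm using 2 <;> funext j <;> have := j.isLt <;> dsimp only [blocks] <;>
    split_ifs <;> first | rfl | omega | (congr 1 <;> omega)

section Preorder

variable [Preorder X]

theorem monotone_blocks (k : ℕ) (a : X) : Monotone (blocks n k a) := by
  intro t c htc j
  unfold blocks
  split_ifs
  exacts [le_rfl, htc]

theorem antitone_blocks_of_le {a c : X} (hac : a ≤ c) : Antitone fun k => blocks n k a c := by
  intro k l hkl j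
  simp only [blocks]
  split_ifs <;> first | exact le_rfl | exact hac | omega

theorem blocks_le_of_le {a c : X} (hac : a ≤ c) (k : ℕ) (j : Fin n) : blocks n k a c j ≤ c := by
  unfold blocks
  split_ifs
  exacts [hac, le_rfl]

theorem Nondecr.monotone (hM : Nondecr n F) : Monotone F :=
  hM

theorem Nondecr.dual (hM : Nondecr n F) : Nondecr (X := Xᵒᵈ) n F :=
  fun x y hxy => hM y x hxy

theorem Nondecr.apply_le_of_forall_le (hM : Nondecr n F) (hI : Idem n F) {x : Fin n → X}
    {c : X} (hx : ∀ j, x j ≤ c) : F x ≤ c :=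
  hI c ▸ hM x _ hx

end Preorder

theorem apply_blocks_eq_of_le [PartialOrder X] {k : ℕ} (hM : Nondecr n F) (hI : Idem n F)
    {a c : X} (hac : a ≤ c) (hk : k ≤ n - 1)
    (hfix : F (blocks n k a c) = F (blocks n (n - 1) a (F (blocks n k a c)))) :
    F (blocks n k a c) = F (blocks n (n - 1) a c) := by
  have hg : F (blocks n k a c) ≤ c := hM.apply_le_of_forall_le hI (blocks_le_of_le hac k)
  refine le_antisymm ?_ (hM.monotone (antitone_blocks_of_le hac hk))
  calc F (blocks n k a c) = F (blocks n (n - 1) a (F (blocks n k a c))) := hfix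
    _ ≤ F (blocks n (n - 1) a c) := hM.monotone (monotone_blocks _ a hg)

end

theorem stmt1_general {X : Type*} [LinearOrder X] (n : ℕ)
    (F : (Fin n → X) → X) (hA : NAssoc n F) (hI : Idem n F) (hM : Nondecr n F)
    (a c : X) (k : ℕ) (hk1 : 1 ≤ k) (hk2 : k ≤ n - 1) :
    F (fun j => if (j : ℕ) < k then a else c) =
      F (fun j => if (j : ℕ) < n - 1 then a else c) := by
  have hfix : F (blocks n k a c) = F (blocks n (n - 1) a (F (blocks n k a c))) := by
    have := hA.apply_eq_apply_blocks hI fun j => if j < k then a else c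
    rwa [if_pos (show 0 < k from hk1)] at this
  rcases le_total a c with hac | hca
  · exact apply_blocks_eq_of_le hM hI hac hk2 hfix
  · exact apply_blocks_eq_of_le (X := Xᵒᵈ) hM.dual hI hca hk2 hfix

theorem stmt1 {X : Type*} [LinearOrder X] (n : ℕ) (hn : 2 ≤ n)
    (F : (Fin n → X) → X) (hA : NAssoc n F) (hI : Idem n F) (hM : Nondecr n F)
    (a c : X) (k : ℕ) (hk1 : 1 ≤ k) (hk2 : k ≤ n - 1) :
    F (fun j => if (j : ℕ) < k then a else c) =
      F (fun j => if (j : ℕ) < n - 1 then a else c) :=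
  stmt1_general n F hA hI hM a c k hk1 hk2
end

section
/- Let X be a totally ordered set and F : X^n → X an n-associative, idempotent, nondecreasing function. Define G : X^2 → X by G(a,c) = F(a, (n-1)·c). Then G is associative, idempotent and nondecreasing. -/
/-! Write `D k = F(k·a, (n-k)·c)`. Bracketing the words `((n-1)·a, n·c)` and `(n·a, (n-1)·c)`
in two ways gives `D (n-1) = F(a, D (n-2), (n-2)·c)` and `D 1 = F(a, D (n-1), (n-2)·c)`. As `D` is
monotone in `k` (in one direction or the other, according to how `a` and `c` compare) and `F` is
nondecreasing in its second argument, these squeeze `D 1 = D (n-1)`, i.e.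
`F(a, (n-1)·c) = F((n-1)·a, c)`. So both brackets of the word `((n-1)·a, b, (n-1)·c)` evaluate
through `G`, and its `n`-associativity is the associativity of `G`. -/

/-- `blockApp F a y c i` is `F (i·a, y, (n-1-i)·c)`. -/
def blockApp {X : Type*} {n : ℕ} (F : (Fin n → X) → X) (a y c : X) (i : ℕ) : X :=
  F fun j => if (j : ℕ) < i then a else if (j : ℕ) = i then y else c

section blockApp

variable {X : Type*} {n : ℕ} {F : (Fin n → X) → X}

theorem blockApp_zero (a y c : X) :
    blockApp F a y c 0 = F fun j => if (j : ℕ) = 0 then y else c := by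
  simp [blockApp]

theorem blockApp_sub_one (a y c : X) :
    blockApp F a y c (n - 1) = F fun j => if (j : ℕ) < n - 1 then a else y := by
  unfold blockApp
  congr 1; funext j
  split_ifs <;> first | rfl | omega

theorem blockApp_self_left (a c : X) {i k : ℕ} (h : i + 1 = k) :
    blockApp F a a c i = blockApp F a c c k := by
  unfold blockApp
  congr 1; funext j
  split_ifs <;> first | rfl | omega

theorem blockApp_of_le (hI : Idem n F) (a y c : X) {i : ℕ} (hi : n ≤ i) :
    blockApp F a y c i = a := by
  unfold blockApp
  convert hI a using 2
  funext j
  rw [if_pos (by omega)]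

theorem blockApp_zero_self (hI : Idem n F) (a c : X) : blockApp F a c c 0 = c := by
  simpa [blockApp] using hI c

theorem blockApp_mono_mid [Preorder X] (hM : Nondecr n F) (a c : X) (i : ℕ) :
    Monotone fun y => blockApp F a y c i := by
  intro y y' hy
  apply hM
  intro j
  split_ifs
  exacts [le_rfl, hy, le_rfl]

theorem blockApp_antitone_of_le [Preorder X] (hM : Nondecr n F) {a c : X} (hac : a ≤ c) :
    Antitone fun k => blockApp F a c c k := by
  intro k l hkl
  apply hM
  intro j
  split_ifs <;> first | exact le_rfl | exact hac | omega

theorem blockApp_monotone_of_le [Preorder X] (hM : Nondecr n F) {a c : X} (hca : c ≤ a) :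
    Monotone fun k => blockApp F a c c k := by
  intro k l hkl
  apply hM
  intro j
  split_ifs <;> first | exact le_rfl | exact hca | omega

/-- `n`-associativity applied to the word `(p·a, b, (2n-2-p)·c)`, bracketed at `i` and at `0`. -/
theorem blockApp_nassoc (hA : NAssoc n F) (a b c : X) {i q p : ℕ} (hp : i + q = p)
    (hpn : p < n) :
    blockApp F a (blockApp F a b c q) c i = blockApp F a (blockApp F a b c p) c 0 := by
  have h := hA (fun j => if j < p then a else if j = p then b else c) i (by omega)
  unfold compApp innerApp at h
  beta_reduce at h
  unfold blockApp
  convert h using 2 <;> funext j <;> split_ifs <;>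
    first | rfl | omega | (congr 1; funext k; split_ifs <;> first | rfl | omega)

theorem blockApp_first_eq_last [LinearOrder X] (hn : 2 ≤ n) (hA : NAssoc n F) (hI : Idem n F)
    (hM : Nondecr n F) (a c : X) :
    blockApp F a a c 0 = blockApp F a c c (n - 1) := by
  have hL : blockApp F a (blockApp F a c c (n - 1)) c 1 = blockApp F a a c 0 := by
    have h := blockApp_nassoc hA a a c (i := 1) (q := n - 2) (p := n - 1) (by omega) (by omega)
    rwa [blockApp_self_left a c (by omega : n - 2 + 1 = n - 1),
      blockApp_self_left a c (by omega : n - 1 + 1 = n), blockApp_of_le hI a c c le_rfl] at h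
  have hR : blockApp F a (blockApp F a c c (n - 2)) c 1 = blockApp F a c c (n - 1) := by
    rw [blockApp_nassoc hA a c c (by omega : 1 + (n - 2) = n - 1) (by omega),
      ← blockApp_nassoc hA a c c (add_zero (n - 1)) (by omega), blockApp_zero_self hI]
  have hL₁ : blockApp F a a c 0 = blockApp F a c c 1 := blockApp_self_left a c (zero_add 1)
  rcases le_total a c with hac | hca
  · have anti := blockApp_antitone_of_le hM hac
    refine le_antisymm ?_ (hL₁ ▸ anti (by omega))
    calc blockApp F a a c 0 = blockApp F a (blockApp F a c c (n - 1)) c 1 := hL.symm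
      _ ≤ blockApp F a (blockApp F a c c (n - 2)) c 1 :=
        blockApp_mono_mid hM a c 1 (anti (by omega))
      _ = blockApp F a c c (n - 1) := hR
  · have mono := blockApp_monotone_of_le hM hca
    refine le_antisymm (hL₁ ▸ mono (by omega)) ?_
    calc blockApp F a c c (n - 1) = blockApp F a (blockApp F a c c (n - 2)) c 1 := hR.symm
      _ ≤ blockApp F a (blockApp F a c c (n - 1)) c 1 :=
        blockApp_mono_mid hM a c 1 (mono (by omega))
      _ = blockApp F a a c 0 := hL

end blockApp

theorem stmt2 {X : Type*} [LinearOrder X] (n : ℕ) (hn : 2 ≤ n)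
    (F : (Fin n → X) → X) (hA : NAssoc n F) (hI : Idem n F) (hM : Nondecr n F)
    (G : X → X → X)
    (hG : ∀ a c, G a c = F (fun j => if (j : ℕ) = 0 then a else c)) :
    (∀ a b c, G (G a b) c = G a (G b c)) ∧
    (∀ a, G a a = a) ∧
    (∀ a b a' b', a ≤ a' → b ≤ b' → G a b ≤ G a' b') := by
  have hG₀ (a y c : X) : blockApp F a y c 0 = G y c := by rw [blockApp_zero, hG]
  have hG₁ (a y c : X) : blockApp F a y c (n - 1) = G a y := by
    rw [blockApp_sub_one, ← blockApp_sub_one (F := F) a y y,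
      ← blockApp_first_eq_last hn hA hI hM, hG₀]
  refine ⟨fun a b c => ?_, fun a => ?_, fun a b a' b' ha hb => ?_⟩
  · have h := blockApp_nassoc hA a b c (add_zero (n - 1)) (by omega)
    simp only [hG₀, hG₁] at h
    exact h.symm
  · simpa [hG] using hI a
  · rw [hG, hG]
    apply hM
    intro j
    split_ifs
    exacts [ha, hb]
end

section
/- Let X be a totally ordered set and F : X^3 → X a 3-associative, idempotent, nondecreasing function. Define G(a,c) = F(a,c,c) (= F(a,a,c)). Then F(a,b,c) = G(G(a,b),c) = G(a,G(b,c)) for all a,b,c ∈ X; in particular F is derived from the associative binary function G. -/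
/-!
Idempotence and monotonicity make `F` internal: `F x y z` lies between the least and the largest
of its arguments. By associativity, `t ↦ F a t c` is a monotone map swapping `F a a c` and
`F a c c`, which forces them to be equal. Again by associativity,
`F (F a b b) c c = F a (F b b c) c = F a b (F b c c)`; for `b ≤ c` internality gives
`b ≤ F b b c` and `F b c c ≤ c`, so this common value is squeezed onto `F a b c`.
The case `c ≤ b` is the same statement for the dual order, and `F a b c = F a a (F b b c)` is the
same statement for `F` with its arguments reversed.
-/

theorem Monotone.eq_of_apply_eq_of_apply_eq {α : Type*} [LinearOrder α] {f : α → α}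
    (hf : Monotone f) {x y : α} (hx : f x = y) (hy : f y = x) : x = y := by
  rcases le_total x y with h | h
  · exact le_antisymm h ((hx.symm.trans_le (hf h)).trans_eq hy)
  · exact le_antisymm ((hy.symm.trans_le (hf h)).trans_eq hx) h

structure IsMonotoneIdempotentTernaryAssoc {X : Type*} [Preorder X] (F : X → X → X → X) :
    Prop where
  assoc : ∀ a b c d e, F (F a b c) d e = F a (F b c d) e ∧ F a (F b c d) e = F a b (F c d e)
  idem : ∀ x, F x x x = x
  mono : ∀ a a' b b' c c', a ≤ a' → b ≤ b' → c ≤ c' → F a b c ≤ F a' b' c'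

namespace IsMonotoneIdempotentTernaryAssoc

variable {X : Type*} {F : X → X → X → X}

section PartialOrder

variable [PartialOrder X] (hF : IsMonotoneIdempotentTernaryAssoc F)
include hF

theorem dual : IsMonotoneIdempotentTernaryAssoc (X := Xᵒᵈ) F where
  assoc := hF.assoc
  idem := hF.idem
  mono a a' b b' c c' ha hb hc := hF.mono a' a b' b c' c ha hb hc

theorem reverse : IsMonotoneIdempotentTernaryAssoc fun a b c ↦ F c b a where
  assoc a b c d e := ⟨(hF.assoc e d c b a).2.symm, (hF.assoc e d c b a).1.symm⟩
  idem := hF.idem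
  mono a a' b b' c c' ha hb hc := hF.mono c c' b b' a a' hc hb ha

theorem le_apply {m x y z : X} (hx : m ≤ x) (hy : m ≤ y) (hz : m ≤ z) : m ≤ F x y z :=
  hF.idem m ▸ hF.mono m x m y m z hx hy hz

theorem apply_le {m x y z : X} (hx : x ≤ m) (hy : y ≤ m) (hz : z ≤ m) : F x y z ≤ m :=
  hF.idem m ▸ hF.mono x m y m z m hx hy hz

theorem eq_apply_apply_right_of_le (a : X) {b c : X} (hbc : b ≤ c) :
    F a b c = F (F a b b) c c := by
  have hlow : F a b c ≤ F a (F b b c) c :=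
    hF.mono a a b _ c c le_rfl (hF.le_apply le_rfl le_rfl hbc) le_rfl
  have hup : F a b (F b c c) ≤ F a b c :=
    hF.mono a a b b _ c le_rfl le_rfl (hF.apply_le hbc le_rfl le_rfl)
  rw [(hF.assoc a b b c c).1]
  exact le_antisymm hlow ((hF.assoc a b b c c).2.trans_le hup)

end PartialOrder

variable [LinearOrder X] (hF : IsMonotoneIdempotentTernaryAssoc F)
include hF

theorem apply_right_right_eq_apply_left_right (a c : X) : F a c c = F a a c :=
  Monotone.eq_of_apply_eq_of_apply_eq (f := fun t ↦ F a t c)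
    (fun _ _ h ↦ hF.mono a a _ _ c c le_rfl h le_rfl)
    (by simpa only [hF.idem c] using (hF.assoc a a c c c).2)
    (by simpa only [hF.idem a] using (hF.assoc a a a c c).1.symm)

theorem eq_apply_apply_right (a b c : X) : F a b c = F (F a b b) c c := by
  rcases le_total b c with hbc | hcb
  · exact hF.eq_apply_apply_right_of_le a hbc
  · exact hF.dual.eq_apply_apply_right_of_le a hcb

theorem eq_apply_left_apply (a b c : X) : F a b c = F a a (F b b c) :=
  hF.reverse.eq_apply_apply_right c b a

end IsMonotoneIdempotentTernaryAssoc

theorem stmt4 {X : Type*} [LinearOrder X] (F : X → X → X → X)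
    (hA : ∀ a b c d e, F (F a b c) d e = F a (F b c d) e ∧
          F a (F b c d) e = F a b (F c d e))
    (hI : ∀ x, F x x x = x)
    (hM : ∀ a a' b b' c c', a ≤ a' → b ≤ b' → c ≤ c' → F a b c ≤ F a' b' c')
    (G : X → X → X) (hG : ∀ a c, G a c = F a c c) :
    (∀ a c, F a c c = F a a c) ∧
    ∀ a b c, F a b c = G (G a b) c ∧ F a b c = G a (G b c) := by
  have hF : IsMonotoneIdempotentTernaryAssoc F := ⟨hA, hI, hM⟩
  refine ⟨hF.apply_right_right_eq_apply_left_right, fun a b c ↦ ⟨?_, ?_⟩⟩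
  · rw [hG, hG]
    exact hF.eq_apply_apply_right a b c
  · rw [hG, hG, hF.apply_right_right_eq_apply_left_right a,
      hF.apply_right_right_eq_apply_left_right b]
    exact hF.eq_apply_left_apply a b c
end

section
/- Let X be a totally ordered set, a,b,c ∈ X with a ≤ b ≤ c, and F : X^3 → X a 3-associative, idempotent, nondecreasing function. Then F(a,b,c) = F(a,c,c) = F(a,a,c); i.e., the value of F on a monotone triple depends only on the endpoints. -/
/-! By associativity and idempotency, `F a a (F a c c) = F (F a a a) c c = F a c c`. Since
`F a c c ≤ F c c c = c`, monotonicity gives `F a c c ≤ F a a c`, while `F a a c ≤ F a b c ≤ F a c c`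
holds for any `b` between `a` and `c`; so the three values coincide. -/

section

variable {X : Type*} (F : X → X → X → X)

theorem ternary_aa_acc
    (hA : ∀ a b c d e, F (F a b c) d e = F a (F b c d) e ∧
          F a (F b c d) e = F a b (F c d e))
    {a : X} (ha : F a a a = a) (c : X) :
    F a a (F a c c) = F a c c := by
  rw [← (hA a a a c c).2, ← (hA a a a c c).1, ha]

variable [Preorder X]
  (hM : ∀ a a' b b' c c', a ≤ a' → b ≤ b' → c ≤ c' → F a b c ≤ F a' b' c')
include hM

theorem ternary_acc_le_right {a c : X} (hc : F c c c = c) (hac : a ≤ c) : F a c c ≤ c :=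
  calc F a c c ≤ F c c c := hM _ _ _ _ _ _ hac le_rfl le_rfl
    _ = c := hc

theorem ternary_acc_le_aac
    (hA : ∀ a b c d e, F (F a b c) d e = F a (F b c d) e ∧
          F a (F b c d) e = F a b (F c d e))
    (hI : ∀ x, F x x x = x) {a c : X} (hac : a ≤ c) :
    F a c c ≤ F a a c :=
  calc F a c c = F a a (F a c c) := (ternary_aa_acc F hA (hI a) c).symm
    _ ≤ F a a c := hM _ _ _ _ _ _ le_rfl le_rfl (ternary_acc_le_right F hM (hI c) hac)

end

theorem stmt5 {X : Type*} [LinearOrder X] (F : X → X → X → X)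
    (hA : ∀ a b c d e, F (F a b c) d e = F a (F b c d) e ∧
          F a (F b c d) e = F a b (F c d e))
    (hI : ∀ x, F x x x = x)
    (hM : ∀ a a' b b' c c', a ≤ a' → b ≤ b' → c ≤ c' → F a b c ≤ F a' b' c')
    (a b c : X) (hab : a ≤ b) (hbc : b ≤ c) :
    F a b c = F a c c ∧ F a b c = F a a c := by
  have hswap : F a c c ≤ F a a c := ternary_acc_le_aac F hM hA hI (hab.trans hbc)
  have hlow : F a a c ≤ F a b c := hM _ _ _ _ _ _ le_rfl hab le_rfl
  have hhigh : F a b c ≤ F a c c := hM _ _ _ _ _ _ le_rfl hbc le_rfl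
  exact ⟨le_antisymm hhigh (hswap.trans hlow), le_antisymm (hhigh.trans hswap) hlow⟩
end

section
/- Let X be a totally ordered set and F : X^n → X (n ≥ 2) an n-associative, idempotent, nondecreasing function. Then there exists a binary function G : X^2 → X, associative, idempotent and nondecreasing, such that F(x_1,...,x_n) = x_1 ∘ x_2 ∘ ... ∘ x_n where x ∘ y = G(x,y); moreover G(a,c) = F(a,(n-1)·c) = F((n-1)·a,c). -/
section

variable {X : Type*} {n : ℕ} {F : (Fin n → X) → X}

def applySeq (n : ℕ) (F : (Fin n → X) → X) (x : ℕ → X) : X := F fun j => x j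

theorem applySeq_congr {x y : ℕ → X} (h : ∀ t < n, x t = y t) :
    applySeq n F x = applySeq n F y :=
  congrArg F (funext fun j => h j j.isLt)

theorem Idem.applySeq_eq_of_forall_eq (hI : Idem n F) {x : ℕ → X} {a : X} (h : ∀ t < n, x t = a) :
    applySeq n F x = a :=
  (applySeq_congr h).trans (hI a)

theorem Nondecr.applySeq_le [Preorder X] (hM : Nondecr n F) {x y : ℕ → X}
    (h : ∀ t < n, x t ≤ y t) : applySeq n F x ≤ applySeq n F y :=
  hM _ _ fun j => h j j.isLt

/-- `compApp n F x i` is `applySeq n F (collapse n x i (innerApp n F x i))`. -/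
def collapse (n : ℕ) (x : ℕ → X) (i : ℕ) (v : X) (t : ℕ) : X :=
  if t < i then x t else if t = i then v else x (t + n - 1)

theorem NAssoc.applySeq_collapse_eq (hA : NAssoc n F) {x : ℕ → X} {i j : ℕ} {v w : X}
    (hi : i ≤ n - 1) (hj : j ≤ n - 1) (hv : applySeq n F (fun u => x (i + u)) = v)
    (hw : applySeq n F (fun u => x (j + u)) = w) :
    applySeq n F (collapse n x i v) = applySeq n F (collapse n x j w) := by
  subst hv hw
  exact (hA x i hi).trans (hA x j hj).symm

/-- `F (a, (n-1)·c)`. -/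
def padRight (n : ℕ) (F : (Fin n → X) → X) (a c : X) : X :=
  applySeq n F fun t => if t = 0 then a else c

/-- `F ((n-1)·a, c)`. -/
def padLeft (n : ℕ) (F : (Fin n → X) → X) (a c : X) : X :=
  applySeq n F fun t => if t = n - 1 then c else a

theorem Idem.padRight_self (hI : Idem n F) (a : X) : padRight n F a a = a :=
  hI.applySeq_eq_of_forall_eq fun t _ => by split_ifs <;> rfl

theorem Nondecr.padRight_le [Preorder X] (hM : Nondecr n F) {a b a' b' : X} (ha : a ≤ a')
    (hb : b ≤ b') : padRight n F a b ≤ padRight n F a' b' :=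
  hM.applySeq_le fun t _ => by split_ifs <;> assumption

theorem NAssoc.padLeft_padRight (hA : NAssoc n F) (a b c : X) :
    padLeft n F a (padRight n F b c) = padRight n F (padLeft n F a b) c := by
  set s : ℕ → X := fun t => if t < n - 1 then a else if t = n - 1 then b else c
  calc padLeft n F a (padRight n F b c)
      = applySeq n F (collapse n s (n - 1) (padRight n F b c)) :=
        applySeq_congr fun t _ => by simp only [collapse, s]; split_ifs <;> first | rfl | omega
    _ = applySeq n F (collapse n s 0 (padLeft n F a b)) :=
        hA.applySeq_collapse_eq le_rfl (Nat.zero_le _)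
          (applySeq_congr fun t _ => by simp only [s]; split_ifs <;> first | rfl | omega)
          (applySeq_congr fun t _ => by simp only [s]; split_ifs <;> first | rfl | omega)
    _ = padRight n F (padLeft n F a b) c :=
        applySeq_congr fun t _ => by simp only [collapse, s]; split_ifs <;> first | rfl | omega

theorem Idem.padLeft_self (hI : Idem n F) (a : X) : padLeft n F a a = a :=
  hI.applySeq_eq_of_forall_eq fun t _ => by split_ifs <;> rfl

theorem Nondecr.padLeft_le [Preorder X] (hM : Nondecr n F) {a b a' b' : X} (ha : a ≤ a')
    (hb : b ≤ b') : padLeft n F a b ≤ padLeft n F a' b' :=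
  hM.applySeq_le fun t _ => by split_ifs <;> assumption

/-- For `a ≤ c`, `padLeft a c ≤ padRight a c` entrywise, while `padLeft a c` is a fixed point of
`padRight · c` (by `padLeft_padRight` and idempotence) and lies above `a`; the case `c ≤ a` is
symmetric. -/
theorem padRight_eq_padLeft [LinearOrder X] (hn : 2 ≤ n) (hA : NAssoc n F) (hI : Idem n F)
    (hM : Nondecr n F) (a c : X) : padRight n F a c = padLeft n F a c := by
  rcases le_total a c with hac | hca
  · apply le_antisymm
    · calc padRight n F a c
          ≤ padRight n F (padLeft n F a c) c :=
            hM.padRight_le ((hI.padLeft_self a).symm.trans_le (hM.padLeft_le le_rfl hac)) le_rfl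
        _ = padLeft n F a c := by rw [← hA.padLeft_padRight, hI.padRight_self]
    · exact hM.applySeq_le fun t _ => by split_ifs <;> first | exact le_rfl | exact hac | omega
  · apply le_antisymm
    · exact hM.applySeq_le fun t _ => by split_ifs <;> first | exact le_rfl | exact hca | omega
    · calc padLeft n F a c
          ≤ padLeft n F a (padRight n F a c) :=
            hM.padLeft_le le_rfl ((hI.padRight_self c).symm.trans_le (hM.padRight_le hca le_rfl))
        _ = padRight n F a c := by rw [hA.padLeft_padRight, hI.padLeft_self]

theorem padRight_assoc [LinearOrder X] (hn : 2 ≤ n) (hA : NAssoc n F) (hI : Idem n F)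
    (hM : Nondecr n F) (a b c : X) :
    padRight n F (padRight n F a b) c = padRight n F a (padRight n F b c) := by
  rw [padRight_eq_padLeft hn hA hI hM a b, ← hA.padLeft_padRight,
    ← padRight_eq_padLeft hn hA hI hM a]

/- Stretch the entry `x j` to a block of `n` copies: collapsing that block at `j` gives back `x`
by idempotence, collapsing the window starting at `j + 1` gives the update. -/
theorem NAssoc.applySeq_eq_update_succ_padLeft (hA : NAssoc n F) (hI : Idem n F) (x : ℕ → X) {j : ℕ}
    (hj : j + 1 < n) :
    applySeq n F x = applySeq n F (Function.update x (j + 1) (padLeft n F (x j) (x (j + 1)))) := by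
  set s : ℕ → X := fun t => if t ≤ j then x t else if t < j + n then x j else x (t - n + 1)
  calc applySeq n F x
      = applySeq n F (collapse n s j (x j)) :=
        applySeq_congr fun t _ => by
          simp only [collapse, s]; split_ifs <;> congr 1 <;> omega
    _ = applySeq n F (collapse n s (j + 1) (padLeft n F (x j) (x (j + 1)))) :=
        hA.applySeq_collapse_eq (by omega) (by omega)
          (hI.applySeq_eq_of_forall_eq fun u _ => by
            simp only [s]; split_ifs <;> congr 1 <;> omega)
          (applySeq_congr fun u _ => by
            simp only [s]; split_ifs <;> congr 1 <;> omega)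
    _ = applySeq n F (Function.update x (j + 1) (padLeft n F (x j) (x (j + 1)))) :=
        applySeq_congr fun t _ => by
          simp only [collapse, s, Function.update_apply]
          split_ifs <;> congr 1 <;> omega

theorem NAssoc.applySeq_eq_update_padRight (hA : NAssoc n F) (hI : Idem n F) (x : ℕ → X) {j : ℕ}
    (hj : j + 1 < n) :
    applySeq n F x = applySeq n F (Function.update x j (padRight n F (x j) (x (j + 1)))) := by
  set s : ℕ → X := fun t =>
    if t ≤ j then x t else if t < j + n + 1 then x (j + 1) else x (t - n + 1)
  calc applySeq n F x
      = applySeq n F (collapse n s (j + 1) (x (j + 1))) :=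
        applySeq_congr fun t _ => by
          simp only [collapse, s]; split_ifs <;> congr 1 <;> omega
    _ = applySeq n F (collapse n s j (padRight n F (x j) (x (j + 1)))) :=
        hA.applySeq_collapse_eq (by omega) (by omega)
          (hI.applySeq_eq_of_forall_eq fun u _ => by
            simp only [s]; split_ifs <;> congr 1 <;> omega)
          (applySeq_congr fun u _ => by
            simp only [s]; split_ifs <;> congr 1 <;> omega)
    _ = applySeq n F (Function.update x j (padRight n F (x j) (x (j + 1)))) :=
        applySeq_congr fun t _ => by
          simp only [collapse, s, Function.update_apply]
          split_ifs <;> congr 1 <;> omega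

theorem iterComp_absorb {G : X → X → X} (hG : ∀ a b c, G (G a b) c = G a (G b c))
    (hI : ∀ a, G a a = a) (x : ℕ → X) {j m : ℕ} (hjm : j ≤ m) :
    G (iterComp G x j) (iterComp G x m) = iterComp G x m := by
  induction m, hjm using Nat.le_induction with
  | base => exact hI _
  | succ m _ ih =>
    show G _ (G _ _) = G _ _
    rw [← hG, ih]

theorem applySeq_eq_prefix_iterComp [LinearOrder X] (hn : 2 ≤ n) (hA : NAssoc n F)
    (hI : Idem n F) (hM : Nondecr n F) (x : ℕ → X) {k : ℕ} (hk : k < n) :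
    applySeq n F x =
      applySeq n F (fun t => if t ≤ k then iterComp (padRight n F) x t else x t) := by
  induction k with
  | zero =>
    refine applySeq_congr fun t _ => ?_
    split_ifs with ht
    · obtain rfl := Nat.le_zero.mp ht; rfl
    · rfl
  | succ k ih =>
    rw [ih (by omega), hA.applySeq_eq_update_succ_padLeft hI _ (j := k) (by omega),
      ← padRight_eq_padLeft hn hA hI hM]
    congr 1
    funext t
    rw [Function.update_apply]
    split_ifs <;> first | omega | (subst_vars; rfl)

theorem NAssoc.applySeq_eq_of_absorb (hA : NAssoc n F) (hI : Idem n F) (hn : 0 < n) (y : ℕ → X)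
    (hy : ∀ j < n - 1, padRight n F (y j) (y (n - 1)) = y (n - 1)) :
    applySeq n F y = y (n - 1) := by
  have key : ∀ d < n, applySeq n F y =
      applySeq n F (fun t => if t + d < n - 1 then y t else y (n - 1)) := by
    intro d hd
    induction d with
    | zero => exact applySeq_congr fun t _ => by split_ifs <;> first | rfl | (congr 1; omega)
    | succ d ih =>
      rw [ih (by omega), hA.applySeq_eq_update_padRight hI _ (j := n - 2 - d) (by omega)]
      congr 1
      funext t
      rw [Function.update_apply]
      split_ifs <;> first | omega | exact hy _ (by omega) | rfl
  exact (key (n - 1) (by omega)).trans (hI.applySeq_eq_of_forall_eq fun t _ => if_neg (by omega))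

theorem derivedFrom_padRight [LinearOrder X] (hn : 2 ≤ n) (hA : NAssoc n F) (hI : Idem n F)
    (hM : Nondecr n F) : DerivedFrom n F (padRight n F) := fun x =>
  calc applySeq n F x
      = applySeq n F (fun t => if t ≤ n - 1 then iterComp (padRight n F) x t else x t) :=
        applySeq_eq_prefix_iterComp hn hA hI hM x (by omega)
    _ = applySeq n F (iterComp (padRight n F) x) := applySeq_congr fun t _ => if_pos (by omega)
    _ = iterComp (padRight n F) x (n - 1) :=
        hA.applySeq_eq_of_absorb hI (by omega) _ fun _ hj =>
          iterComp_absorb (padRight_assoc hn hA hI hM) hI.padRight_self x hj.le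

end

theorem stmt8 {X : Type*} [LinearOrder X] (n : ℕ) (hn : 2 ≤ n)
    (F : (Fin n → X) → X) (hA : NAssoc n F) (hI : Idem n F) (hM : Nondecr n F) :
    ∃ G : X → X → X,
      (∀ a b c, G (G a b) c = G a (G b c)) ∧
      (∀ a, G a a = a) ∧
      (∀ a b a' b', a ≤ a' → b ≤ b' → G a b ≤ G a' b') ∧
      DerivedFrom n F G ∧
      (∀ a c, G a c = F (fun j => if (j : ℕ) = 0 then a else c) ∧
              G a c = F (fun j => if (j : ℕ) = n - 1 then c else a)) :=
  ⟨padRight n F, padRight_assoc hn hA hI hM, hI.padRight_self,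
    fun _ _ _ _ => hM.padRight_le, derivedFrom_padRight hn hA hI hM,
    fun a c => ⟨rfl, padRight_eq_padLeft hn hA hI hM a c⟩⟩
end

section
/- Let X be a totally ordered set and F : X^n → X an n-associative, quasitrivial, nondecreasing function. Then F is reducible, i.e., derived from an associative binary function G : X^2 → X. -/
/-!
Put `a ∘ b = F (a, b, …, b)`. For a tuple `z` let `C = F (z₁, …, z_{n-1}, z_{n-1})` and
`e = z_{n-1}`. Rebracketing `z₀, …, z_{n-1}, e, …, e` in two ways gives `C ∘ e = C` and
`F z = F (z₀, C, e, …, e)`. As `F` is nondecreasing, `k ↦ F (C, …, C, e, …, e)` (`k` copies of `C`)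
is monotone, hence constantly `C` for `1 ≤ k ≤ n`; a rebracketing of `z₀, C, …, C, e, …, e` then
turns `F (z₀, C, e, …, e)` into `F (z₀, C, …, C) = z₀ ∘ C`. So `F z = z₀ ∘ F (z₁, …, z_{n-1}, z_{n-1})`,
which unrolls to `F z = z₀ ∘ ⋯ ∘ z_{n-1}` once `∘` is associative.

For associativity, `(a ∘ b) ∘ c = F (a, D, c, …, c)` with `D = F (b, …, b, c) ∈ {b, c}`: if `D = c`
monotonicity forces `b ∘ c = c`, and if `D = b` the decomposition above applies.
-/

section Reduction

variable {X : Type*} {n : ℕ} {F : (Fin n → X) → X}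

def seqApp (n : ℕ) (F : (Fin n → X) → X) (s : ℕ → X) : X :=
  F fun j => s j

theorem seqApp_congr {s t : ℕ → X} (h : ∀ m < n, s m = t m) : seqApp n F s = seqApp n F t :=
  congrArg F (funext fun j => h j j.isLt)

def block (k : ℕ) (a b : X) : ℕ → X :=
  fun m => if m < k then a else b

def reductOp (n : ℕ) (F : (Fin n → X) → X) (a b : X) : X :=
  seqApp n F (block 1 a b)

theorem Quasitrivial.seqApp_const (hQ : Quasitrivial n F) (a : X) : seqApp n F (fun _ => a) = a :=
  (hQ fun _ => a).choose_spec

theorem Quasitrivial.seqApp_block_mem (hQ : Quasitrivial n F) (k : ℕ) (a b : X) :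
    seqApp n F (block k a b) = a ∨ seqApp n F (block k a b) = b := by
  obtain ⟨j, hj⟩ := hQ fun j => block k a b j
  rw [seqApp, hj, block]
  split_ifs <;> simp

/-- `s` and `t` are the two bracketings of `x 0, …, x (2n-2)` with the inner `F` at positions
`i` and `k`, where it evaluates to `u` and `v`. -/
theorem NAssoc.seqApp_eq_seqApp (hA : NAssoc n F) (x : ℕ → X) {i k : ℕ} (hi : i ≤ n - 1)
    (hk : k ≤ n - 1) {u v : X} (hu : seqApp n F (fun m => x (i + m)) = u)
    (hv : seqApp n F (fun m => x (k + m)) = v) {s t : ℕ → X}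
    (hs : ∀ m < n, s m = if m < i then x m else if m = i then u else x (m + n - 1))
    (ht : ∀ m < n, t m = if m < k then x m else if m = k then v else x (m + n - 1)) :
    seqApp n F s = seqApp n F t := by
  subst hu hv
  rw [seqApp_congr hs, seqApp_congr ht]
  exact (hA x i hi).trans (hA x k hk).symm

theorem NAssoc.reductOp_seqApp_last (hA : NAssoc n F) (hQ : Quasitrivial n F) (z : ℕ → X) :
    reductOp n F (seqApp n F z) (z (n - 1)) = seqApp n F z := by
  refine hA.seqApp_eq_seqApp (fun m => z (min m (n - 1))) (i := 0) (k := n - 1)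
    (u := seqApp n F z) (v := z (n - 1)) (Nat.zero_le _) le_rfl ?_ ?_ ?_ ?_
  · exact seqApp_congr fun m _ => congrArg z (by omega)
  · exact (seqApp_congr fun m _ => congrArg z (by omega)).trans (hQ.seqApp_const _)
  · intro m _
    grind [block]
  · intro m _
    grind

theorem iterComp_succ {G : X → X → X} (hG : ∀ a b c, G (G a b) c = G a (G b c)) (y : ℕ → X)
    (d : ℕ) : iterComp G y (d + 1) = G (y 0) (iterComp G (fun m => y (m + 1)) d) := by
  induction d with
  | zero => rfl
  | succ d ih => rw [iterComp, ih, hG, iterComp]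

theorem Nondecr.seqApp_mono [Preorder X] (hM : Nondecr n F) : Monotone (seqApp n F) :=
  fun _ _ h => hM _ _ fun j => h j

theorem block_antitone [Preorder X] {a b : X} (hab : a ≤ b) : Antitone fun k => block k a b := by
  intro k k' hk m
  simp only [block]
  split_ifs <;> first | exact le_rfl | exact hab | omega

theorem block_monotone [Preorder X] {a b : X} (hba : b ≤ a) : Monotone fun k => block k a b := by
  intro k k' hk m
  simp only [block]
  split_ifs <;> first | exact le_rfl | exact hba | omega

section LinearOrder

variable [LinearOrder X]

theorem Nondecr.seqApp_block_eq (hM : Nondecr n F) {a b v : X} {k₁ k k₂ : ℕ} (h₁ : k₁ ≤ k)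
    (h₂ : k ≤ k₂) (hv₁ : seqApp n F (block k₁ a b) = v) (hv₂ : seqApp n F (block k₂ a b) = v) :
    seqApp n F (block k a b) = v := by
  rcases le_total a b with hab | hba
  · have hanti := hM.seqApp_mono.comp_antitone (block_antitone hab)
    exact le_antisymm (hv₁ ▸ hanti h₁) (hv₂ ▸ hanti h₂)
  · have hmono := hM.seqApp_mono.comp (block_monotone hba)
    exact le_antisymm (hv₂ ▸ hmono h₂) (hv₁ ▸ hmono h₁)

theorem seqApp_eq_reductOp (hn : 2 ≤ n) (hA : NAssoc n F) (hQ : Quasitrivial n F)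
    (hM : Nondecr n F) (z : ℕ → X) :
    seqApp n F z = reductOp n F (z 0) (seqApp n F fun m => z (min (m + 1) (n - 1))) := by
  set C := seqApp n F fun m => z (min (m + 1) (n - 1))
  set e := z (n - 1)
  have hCe : reductOp n F C e = C := by
    have h := hA.reductOp_seqApp_last hQ fun m => z (min (m + 1) (n - 1))
    rwa [show min (n - 1 + 1) (n - 1) = n - 1 by omega] at h
  have hCn : seqApp n F (block (n - 1) C e) = C :=
    hM.seqApp_block_eq (k₁ := 1) (k₂ := n) (by omega) (by omega) hCe
      ((seqApp_congr fun m hm => if_pos hm).trans (hQ.seqApp_const C))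
  calc seqApp n F z = seqApp n F fun m => if m = 0 then z 0 else if m = 1 then C else e := by
        refine hA.seqApp_eq_seqApp (fun m => z (min m (n - 1))) (i := n - 1) (k := 1)
          (u := e) (v := C) le_rfl (by omega)
          ((seqApp_congr fun m _ => congrArg z (by omega)).trans (hQ.seqApp_const _))
          (seqApp_congr fun m _ => congrArg z (by omega)) ?_ ?_
        · intro m _
          grind
        · intro m _
          grind
    _ = seqApp n F fun m => if m = 0 then z 0 else if m ≤ n - 1 then C else e := by
        refine hA.seqApp_eq_seqApp (fun m => if m = 0 then z 0 else if m ≤ n - 1 then C else e)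
          (i := 1) (k := n - 1) (u := C) (v := C) (by omega) le_rfl ?_ ?_ ?_ ?_
        · exact (seqApp_congr fun m _ => by grind [block]).trans hCn
        · exact (seqApp_congr fun m _ => by grind [block]).trans hCe
        · intro m _
          grind
        · intro m _
          grind
    _ = reductOp n F (z 0) C := seqApp_congr fun m _ => by grind [block]

theorem reductOp_assoc (hn : 2 ≤ n) (hA : NAssoc n F) (hQ : Quasitrivial n F)
    (hM : Nondecr n F) (a b c : X) :
    reductOp n F (reductOp n F a b) c = reductOp n F a (reductOp n F b c) := by
  set D := seqApp n F (block (n - 1) b c)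
  have hsplit : reductOp n F (reductOp n F a b) c =
      seqApp n F fun m => if m = 0 then a else if m = 1 then D else c := by
    refine hA.seqApp_eq_seqApp (fun m => if m = 0 then a else if m < n then b else c)
      (i := 0) (k := 1) (u := reductOp n F a b) (v := D) (Nat.zero_le _) (by omega) ?_ ?_ ?_ ?_
    · exact seqApp_congr fun m _ => by grind [block]
    · exact seqApp_congr fun m _ => by grind [block]
    · intro m _
      grind [block]
    · intro m _
      grind
  rcases hn.eq_or_lt with rfl | hn3
  · rw [hsplit]
    exact seqApp_congr fun m _ => by grind [block, reductOp]
  have hD : D = b ∨ D = c := hQ.seqApp_block_mem (n - 1) b c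
  rcases hD with hD | hD
  · rw [hsplit, hD, seqApp_eq_reductOp hn hA hQ hM]
    exact congrArg _ (seqApp_congr fun m _ => by grind [block])
  · have hbc : reductOp n F b c = c :=
      hM.seqApp_block_eq (k₁ := 0) (k₂ := n - 1) (Nat.zero_le _) (by omega)
        ((seqApp_congr fun m _ => if_neg (Nat.not_lt_zero m)).trans (hQ.seqApp_const c)) hD
    rw [hsplit, hD, hbc]
    exact seqApp_congr fun m _ => by grind [block]

theorem seqApp_min_eq_iterComp (hn : 2 ≤ n) (hA : NAssoc n F) (hQ : Quasitrivial n F)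
    (hM : Nondecr n F) (y : ℕ → X) {d : ℕ} (hd : d ≤ n - 1) :
    seqApp n F (fun m => y (min m d)) = iterComp (reductOp n F) y d := by
  induction d generalizing y with
  | zero => exact (seqApp_congr fun m _ => by rw [Nat.min_zero]).trans (hQ.seqApp_const (y 0))
  | succ d ih =>
    rw [seqApp_eq_reductOp hn hA hQ hM, iterComp_succ (reductOp_assoc hn hA hQ hM),
      ← ih (fun m => y (m + 1)) (by omega)]
    exact congrArg _ (seqApp_congr fun m _ => congrArg y (by omega))

theorem derivedFrom_reductOp (hn : 2 ≤ n) (hA : NAssoc n F) (hQ : Quasitrivial n F)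
    (hM : Nondecr n F) : DerivedFrom n F (reductOp n F) := fun x =>
  show seqApp n F x = _ from
    (seqApp_congr (t := fun m => x (min m (n - 1))) fun m _ => congrArg x (by omega)).trans
      (seqApp_min_eq_iterComp hn hA hQ hM x le_rfl)

end LinearOrder

end Reduction

theorem stmt12 {X : Type*} [LinearOrder X] (n : ℕ) (hn : 2 ≤ n)
    (F : (Fin n → X) → X) (hA : NAssoc n F) (hQ : Quasitrivial n F)
    (hM : Nondecr n F) :
    ∃ G : X → X → X, (∀ a b c, G (G a b) c = G a (G b c)) ∧ DerivedFrom n F G :=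
  ⟨reductOp n F, reductOp_assoc hn hA hQ hM, derivedFrom_reductOp hn hA hQ hM⟩
end

section
/- Let X be a totally ordered set and F : X^2 → X an associative, idempotent, nondecreasing binary function having a neutral element e. Then F is quasitrivial: for all x,y ∈ X, F(x,y) ∈ {x,y}. Moreover, if x,y ≤ e then F(x,y) = min(x,y), and if x,y ≥ e then F(x,y) = max(x,y). -/
/-! Monotonicity and idempotency squeeze `F x y` between `min x y` and `max x y`; the neutral
element then forces `F = min` below `e` and `F = max` above `e`. For quasitriviality put
`a = F x y`, so that `F x a = a = F a y` by associativity and idempotency. If `a ≤ e`, one of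
`x, y` lies below `a`, and `F = min` on `(-∞, e]` turns the matching identity into `a = x` or
`a = y`; the case `e ≤ a` is dual. -/

section

variable {X : Type*} [LinearOrder X] {F : X → X → X}

theorem min_le_of_idempotent_of_mono (hI : ∀ x, F x x = x)
    (hM : ∀ a a' b b', a ≤ a' → b ≤ b' → F a b ≤ F a' b') (x y : X) :
    min x y ≤ F x y :=
  calc min x y = F (min x y) (min x y) := (hI _).symm
    _ ≤ F x y := hM _ _ _ _ (min_le_left x y) (min_le_right x y)

theorem le_max_of_idempotent_of_mono (hI : ∀ x, F x x = x)
    (hM : ∀ a a' b b', a ≤ a' → b ≤ b' → F a b ≤ F a' b') (x y : X) :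
    F x y ≤ max x y :=
  calc F x y ≤ F (max x y) (max x y) := hM _ _ _ _ (le_max_left x y) (le_max_right x y)
    _ = max x y := hI _

theorem eq_min_of_le_neutral (hI : ∀ x, F x x = x)
    (hM : ∀ a a' b b', a ≤ a' → b ≤ b' → F a b ≤ F a' b')
    {e : X} (he : ∀ x, F e x = x ∧ F x e = x) {x y : X} (hx : x ≤ e) (hy : y ≤ e) :
    F x y = min x y := by
  refine le_antisymm (le_min ?_ ?_) (min_le_of_idempotent_of_mono hI hM x y)
  · calc F x y ≤ F x e := hM x x y e le_rfl hy
      _ = x := (he x).2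
  · calc F x y ≤ F e y := hM x e y y hx le_rfl
      _ = y := (he y).1

theorem eq_max_of_neutral_le (hI : ∀ x, F x x = x)
    (hM : ∀ a a' b b', a ≤ a' → b ≤ b' → F a b ≤ F a' b')
    {e : X} (he : ∀ x, F e x = x ∧ F x e = x) {x y : X} (hx : e ≤ x) (hy : e ≤ y) :
    F x y = max x y := by
  refine le_antisymm (le_max_of_idempotent_of_mono hI hM x y) (max_le ?_ ?_)
  · calc x = F x e := (he x).2.symm
      _ ≤ F x y := hM x x e y le_rfl hy
  · calc y = F e y := (he y).1.symm
      _ ≤ F x y := hM e x y y hx le_rfl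

end

section

variable {α : Type*} {F : α → α → α}

theorem apply_left_apply_of_assoc_of_idempotent (hA : ∀ a b c, F (F a b) c = F a (F b c))
    (hI : ∀ x, F x x = x) (x y : α) : F x (F x y) = F x y := by
  rw [← hA, hI]

theorem apply_apply_right_of_assoc_of_idempotent (hA : ∀ a b c, F (F a b) c = F a (F b c))
    (hI : ∀ x, F x x = x) (x y : α) : F (F x y) y = F x y := by
  rw [hA, hI]

end

theorem eq_or_eq_of_assoc_of_idempotent_of_mono_of_neutral {X : Type*} [LinearOrder X]
    {F : X → X → X} (hA : ∀ a b c, F (F a b) c = F a (F b c)) (hI : ∀ x, F x x = x)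
    (hM : ∀ a a' b b', a ≤ a' → b ≤ b' → F a b ≤ F a' b')
    {e : X} (he : ∀ x, F e x = x ∧ F x e = x) (x y : X) :
    F x y = x ∨ F x y = y := by
  have hxa := apply_left_apply_of_assoc_of_idempotent hA hI x y
  have hay := apply_apply_right_of_assoc_of_idempotent hA hI x y
  set a := F x y
  rcases le_total a e with hae | hea
  · rcases min_le_iff.mp (min_le_of_idempotent_of_mono hI hM x y) with hx | hy
    · left
      rw [← hxa, eq_min_of_le_neutral hI hM he (hx.trans hae) hae, min_eq_left hx]
    · right
      rw [← hay, eq_min_of_le_neutral hI hM he hae (hy.trans hae), min_eq_right hy]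
  · rcases le_max_iff.mp (le_max_of_idempotent_of_mono hI hM x y) with hx | hy
    · left
      rw [← hxa, eq_max_of_neutral_le hI hM he (hea.trans hx) hea, max_eq_left hx]
    · right
      rw [← hay, eq_max_of_neutral_le hI hM he hea (hea.trans hy), max_eq_right hy]

theorem stmt13 {X : Type*} [LinearOrder X] (F : X → X → X)
    (hA : ∀ a b c, F (F a b) c = F a (F b c))
    (hI : ∀ x, F x x = x)
    (hM : ∀ a a' b b', a ≤ a' → b ≤ b' → F a b ≤ F a' b')
    (e : X) (he : ∀ x, F e x = x ∧ F x e = x) :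
    (∀ x y, F x y = x ∨ F x y = y) ∧
    (∀ x y, x ≤ e → y ≤ e → F x y = min x y) ∧
    (∀ x y, e ≤ x → e ≤ y → F x y = max x y) :=
  ⟨eq_or_eq_of_assoc_of_idempotent_of_mono_of_neutral hA hI hM he,
    fun _ _ => eq_min_of_le_neutral hI hM he,
    fun _ _ => eq_max_of_neutral_le hI hM he⟩
end

section
/- Let X be a totally ordered Abelian group and g : X → X a monotone bijection. Then F : X^3 → X defined by F(x,y,z) = g^{-1}(g(x) - g(y) + g(z)) is 3-associative and idempotent, and each of its unary sections is monotone (order-preserving in the first and third variables, order-reversing in the second); however F is not nondecreasing (when X has at least two elements), and F is not reducible to a binary associative function. -/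
/-!
Transporting along `g`, `F` is the Mal'cev operation `x - y + z` of the group, so 3-associativity,
idempotency and the monotonicity of the sections are computations in `X`; replacing an
order-reversing `g` by `-g` does not change `F`, so `g` may be assumed order-preserving. Then
`F x y x < x = F x x x` for `x < y`, so `F` is not nondecreasing. If `F x y z = G (G x y) z` with
`G` associative, then `u := G p p` is a right identity of `G`, since `G x u = F x p p = x`; hence
`y = G u y = G (G u y) u = F u y u`, i.e. `2 • g y = 2 • g u` for every `y`, which forces `X` to
be trivial because a linearly ordered group is torsion-free.
-/

namespace Equiv

variable {X A : Type*}

section AddCommGroup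

variable [AddCommGroup A] (g : X ≃ A)

def malcev (x y z : X) : X :=
  g.symm (g x - g y + g z)

theorem malcev_assoc_left (a b c d e : X) :
    g.malcev (g.malcev a b c) d e = g.malcev a (g.malcev b c d) e := by
  simp only [malcev, apply_symm_apply]
  congr 1
  abel

theorem malcev_assoc_right (a b c d e : X) :
    g.malcev a (g.malcev b c d) e = g.malcev a b (g.malcev c d e) := by
  simp only [malcev, apply_symm_apply]
  congr 1
  abel

@[simp]
theorem malcev_self_left (x y : X) : g.malcev x x y = y := by
  simp [malcev]

@[simp]
theorem malcev_self_right (x y : X) : g.malcev x y y = x := by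
  simp [malcev]

theorem malcev_self (x : X) : g.malcev x x x = x :=
  g.malcev_self_left x x

theorem malcev_trans_neg : (g.trans (Equiv.neg A)).malcev = g.malcev := by
  funext x y z
  simp only [malcev, trans_apply, symm_trans_apply, neg_apply, neg_symm]
  congr 1
  abel

theorem not_exists_assoc_malcev_eq [IsAddTorsionFree A] [Nontrivial X] :
    ¬ ∃ G : X → X → X, (∀ a b c, G (G a b) c = G a (G b c)) ∧
        ∀ x y z, g.malcev x y z = G (G x y) z := by
  rintro ⟨G, hassoc, hred⟩
  obtain ⟨p, q, hpq⟩ := exists_pair_ne X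
  set u := G p p
  have right_id (x : X) : G x u = x := by
    rw [← hassoc, ← hred, malcev_self_right]
  have double_eq (y : X) : 2 • g y = 2 • g u := by
    have hy : g.malcev u y u = y :=
      calc g.malcev u y u = G (G u y) u := hred u y u
        _ = G (G u u) y := by rw [right_id, right_id]
        _ = y := by rw [← hred, malcev_self_left]
    have hy' : g u - g y + g u = g y := by
      simpa [malcev] using congrArg g hy
    rw [two_nsmul, two_nsmul]
    nth_rewrite 1 [← hy']
    abel
  exact hpq <| g.injective <| nsmul_right_injective two_ne_zero <|
    (double_eq p).trans (double_eq q).symm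

end AddCommGroup

theorem strictMono_symm [LinearOrder X] [Preorder A] {g : X ≃ A} (hg : StrictMono g) :
    StrictMono g.symm :=
  fun a b h => hg.lt_iff_lt.1 (by simpa using h)

theorem monotone_symm [LinearOrder X] [PartialOrder A] {g : X ≃ A} (hg : Monotone g) :
    Monotone g.symm :=
  (strictMono_symm (hg.strictMono_of_injective g.injective)).monotone

section Ordered

variable [AddCommGroup A] [LinearOrder A] [IsOrderedAddMonoid A] [LinearOrder X] {g : X ≃ A}

theorem exists_monotone_malcev_eq (hg : Monotone g ∨ Antitone g) :
    ∃ g' : X ≃ A, Monotone g' ∧ g'.malcev = g.malcev := by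
  rcases hg with hg | hg
  · exact ⟨g, hg, rfl⟩
  · exact ⟨g.trans (Equiv.neg A), hg.neg, g.malcev_trans_neg⟩

variable (hg : Monotone g)
include hg

theorem monotone_malcev_left (y z : X) : Monotone fun x => g.malcev x y z :=
  fun _ _ h => monotone_symm hg (by gcongr; exact hg h)

theorem antitone_malcev_middle (x z : X) : Antitone fun y => g.malcev x y z :=
  fun _ _ h => monotone_symm hg (by gcongr; exact hg h)

theorem monotone_malcev_right (x y : X) : Monotone fun z => g.malcev x y z :=
  fun _ _ h => monotone_symm hg (by gcongr; exact hg h)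

theorem malcev_lt_self {x y : X} (h : x < y) : g.malcev x y x < x := by
  have hlt := hg.strictMono_of_injective g.injective
  conv_rhs => rw [← g.symm_apply_apply x]
  exact strictMono_symm hlt (by simpa using hlt h)

theorem not_forall_malcev_le [Nontrivial X] :
    ¬ ∀ a a' b b' c c', a ≤ a' → b ≤ b' → c ≤ c' → g.malcev a b c ≤ g.malcev a' b' c' := by
  intro hmono
  obtain ⟨x, y, hxy⟩ := exists_pair_lt X
  have := hmono x x x y x x le_rfl hxy.le le_rfl
  rw [malcev_self] at this
  exact (malcev_lt_self hg hxy).not_ge this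

end Ordered

end Equiv

theorem stmt16 {X : Type*} [AddCommGroup X] [LinearOrder X] [IsOrderedAddMonoid X] [Nontrivial X]
    (g : X ≃ X) (hg : Monotone g ∨ Antitone g)
    (F : X → X → X → X)
    (hF : ∀ x y z, F x y z = g.symm (g x - g y + g z)) :
    (∀ a b c d e, F (F a b c) d e = F a (F b c d) e ∧
        F a (F b c d) e = F a b (F c d e)) ∧
    (∀ x, F x x x = x) ∧
    (∀ b c, Monotone (fun x => F x b c)) ∧
    (∀ a c, Antitone (fun y => F a y c)) ∧
    (∀ a b, Monotone (fun z => F a b z)) ∧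
    ¬ (∀ a a' b b' c c', a ≤ a' → b ≤ b' → c ≤ c' → F a b c ≤ F a' b' c') ∧
    ¬ ∃ G : X → X → X, (∀ a b c, G (G a b) c = G a (G b c)) ∧
        ∀ x y z, F x y z = G (G x y) z := by
  obtain rfl : F = g.malcev := funext₃ hF
  obtain ⟨g', hg', hg'F⟩ := Equiv.exists_monotone_malcev_eq hg
  refine ⟨fun a b c d e => ⟨g.malcev_assoc_left a b c d e, g.malcev_assoc_right a b c d e⟩,
    g.malcev_self, ?_, ?_, ?_, ?_, g.not_exists_assoc_malcev_eq⟩ <;> rw [← hg'F]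
  exacts [Equiv.monotone_malcev_left hg', Equiv.antitone_malcev_middle hg',
    Equiv.monotone_malcev_right hg', Equiv.not_forall_malcev_le hg']
end

section
/- Let X be a totally ordered set with at least two elements and let F : X^n → X be the projection onto the first coordinate, F(x_1,...,x_n) = x_1 (n ≥ 2). Then F is associative, idempotent, quasitrivial and nondecreasing, but F is not extremal: there is no G : X^2 → X such that F(x_1,...,x_n) always equals G(min_i x_i, max_i x_i) or always equals G(max_i x_i, min_i x_i). -/
/-!
`min` and `max` of a tuple are invariant under permuting its entries, so every extremal
operation is symmetric. The first projection is not: swapping the first two entries of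
`(a, b, …, b)` with `a ≠ b` changes its value.
-/

namespace Finset

variable {α ι : Type*} [Fintype ι]

theorem univ_sup'_comp_perm [SemilatticeSup α] (h : (univ : Finset ι).Nonempty)
    (σ : Equiv.Perm ι) (x : ι → α) : univ.sup' h (x ∘ σ) = univ.sup' h x := by
  refine (sup'_comp_eq_map (f := σ.toEmbedding) x h).trans ?_
  simp only [map_univ_equiv]

theorem univ_inf'_comp_perm [SemilatticeInf α] (h : (univ : Finset ι).Nonempty)
    (σ : Equiv.Perm ι) (x : ι → α) : univ.inf' h (x ∘ σ) = univ.inf' h x := by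
  refine (inf'_comp_eq_map (f := σ.toEmbedding) x h).trans ?_
  simp only [map_univ_equiv]

end Finset

section Extremal

variable {X : Type*} [Lattice X] {n : ℕ} {F : (Fin n → X) → X}
  (h : (Finset.univ : Finset (Fin n)).Nonempty) {G : X → X → X}

theorem symm_of_eq_inf'_sup' (hG : ∀ x, F x = G (Finset.univ.inf' h x) (Finset.univ.sup' h x)) :
    Symm n F := by
  intro σ x
  rw [hG, hG, Finset.univ_inf'_comp_perm, Finset.univ_sup'_comp_perm]

theorem symm_of_eq_sup'_inf' (hG : ∀ x, F x = G (Finset.univ.sup' h x) (Finset.univ.inf' h x)) :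
    Symm n F :=
  symm_of_eq_inf'_sup' h (G := fun a b => G b a) hG

end Extremal

section FirstProjection

variable {X : Type*} {n : ℕ} {F : (Fin n → X) → X}

theorem compApp_eq_apply_zero (hn : 0 < n) (hF : ∀ x, F x = x ⟨0, hn⟩) (x : ℕ → X) (i : ℕ) :
    compApp n F x i = x 0 := by
  rcases Nat.eq_zero_or_pos i with rfl | hi
  · simp [compApp, innerApp, hF]
  · simp [compApp, hF, hi]

theorem not_symm_of_eq_apply_zero [Nontrivial X] (hn : 1 < n)
    (hF : ∀ x, F x = x ⟨0, Nat.zero_lt_of_lt hn⟩) : ¬ Symm n F := by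
  obtain ⟨a, b, hab⟩ := exists_pair_ne X
  intro hsymm
  have key := hsymm (Equiv.swap ⟨0, Nat.zero_lt_of_lt hn⟩ ⟨1, hn⟩)
    (Function.update (fun _ => b) ⟨0, Nat.zero_lt_of_lt hn⟩ a)
  exact hab (by simpa [hF, Fin.ext_iff] using key.symm)

end FirstProjection

theorem stmt18 {X : Type*} [LinearOrder X] [Nontrivial X] (n : ℕ) (hn : 2 ≤ n)
    (F : (Fin n → X) → X) (hF : ∀ x, F x = x ⟨0, by omega⟩) :
    NAssoc n F ∧ Idem n F ∧ Quasitrivial n F ∧ Nondecr n F ∧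
    ¬ ∃ G : X → X → X,
      (∀ x : Fin n → X,
        F x = G (Finset.univ.inf' ⟨⟨0, by omega⟩, Finset.mem_univ _⟩ x)
                (Finset.univ.sup' ⟨⟨0, by omega⟩, Finset.mem_univ _⟩ x)) ∨
      (∀ x : Fin n → X,
        F x = G (Finset.univ.sup' ⟨⟨0, by omega⟩, Finset.mem_univ _⟩ x)
                (Finset.univ.inf' ⟨⟨0, by omega⟩, Finset.mem_univ _⟩ x)) := by
  have hn₀ : 0 < n := by omega
  refine ⟨fun x i _ => ?_, fun a => hF _, fun x => ⟨_, hF x⟩,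
    fun x y hxy => by simpa only [hF] using hxy _, ?_⟩
  · rw [compApp_eq_apply_zero hn₀ hF, compApp_eq_apply_zero hn₀ hF]
  · rintro ⟨G, hG | hG⟩
    · exact not_symm_of_eq_apply_zero hn hF (symm_of_eq_inf'_sup' _ hG)
    · exact not_symm_of_eq_apply_zero hn hF (symm_of_eq_sup'_inf' _ hG)
end
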